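/- Consider a quasi-split stretched coupled-task instance. Let g be a nesting assignment with domain F ⊆ X, let M be a matching of G_X on the vertex set X \ F, and let s = |X| − |F| − 2|M|. Then there exists a feasible schedule of makespan Σ_{y∈Y} 3α(y) + 4|M| + 3s, obtained by scheduling each Y-task with its assigned X-tasks nested in its idle window, then each matched pair of X-tasks, then each remaining X-task. -/
import Mathlib


/-!  Coupled-task scheduling with compatibility constraints. -/

/-- A coupled-task `(a, L, b)`: a first sub-task of processing time `a`,
an idle period of length `L`, then a second sub-task of processing time `b`. -/
structure CTask where
  a : ℝ
  L : ℝ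
  b : ℝ

namespace CTask

/-- The set of time instants occupied by the task when started at time `s`. -/
def occupied (t : CTask) (s : ℝ) : Set ℝ :=
  Set.Ico s (s + t.a) ∪ Set.Ico (s + t.a + t.L) (s + t.a + t.L + t.b)

/-- The idle window of the task when started at time `s`. -/
def idleWindow (t : CTask) (s : ℝ) : Set ℝ :=
  Set.Ico (s + t.a) (s + t.a + t.L)

/-- The span of the task when started at time `s`. -/
def span (t : CTask) (s : ℝ) : Set ℝ :=
  Set.Ico s (s + t.a + t.L + t.b)

/-- Total duration `a + L + b` of a coupled-task. -/
def dur (t : CTask) : ℝ := t.a + t.L + t.b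

/-- All three components of the task are positive. -/
def Positive (t : CTask) : Prop := 0 < t.a ∧ 0 < t.L ∧ 0 < t.b

end CTask

/-- The stretched coupled-task with stretch factor `α`, i.e. `(α, α, α)`. -/
def stretched (α : ℝ) : CTask := ⟨α, α, α⟩

/-- A scheduling instance: a coupled-task for each index, together with a
compatibility relation.  `compat t' t` means that the compatibility graph
contains the arc `(t', t)` (so `t'` may be executed during the idle window of
`t`); an undirected edge `{t, t'}` is modelled by `compat t' t ∧ compat t t'`. -/
structure SchedInstance (ι : Type*) where
  task : ι → CTask
  compat : ι → ι → Prop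

namespace SchedInstance

variable {ι : Type*}

/-- A schedule `σ` (assigning a start time to every task) is feasible if all
start times are nonnegative, occupied intervals of distinct tasks are pairwise
disjoint, and whenever an occupied interval of `t'` meets the idle window of
`t`, the compatibility graph contains the arc (or edge) from `t'` to `t`. -/
def Feasible (I : SchedInstance ι) (σ : ι → ℝ) : Prop :=
  (∀ t, 0 ≤ σ t) ∧
  (∀ t t', t ≠ t' →
    Disjoint ((I.task t).occupied (σ t)) ((I.task t').occupied (σ t'))) ∧
  (∀ t t', t ≠ t' →
    (((I.task t').occupied (σ t')) ∩ ((I.task t).idleWindow (σ t))).Nonempty →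
      I.compat t' t)

/-- Completion time of task `t` under schedule `σ`. -/
def endTime (I : SchedInstance ι) (σ : ι → ℝ) (t : ι) : ℝ :=
  σ t + (I.task t).dur

/-- The makespan of `σ` is at most `C`. -/
def MakespanLE (I : SchedInstance ι) (σ : ι → ℝ) (C : ℝ) : Prop :=
  ∀ t, I.endTime σ t ≤ C

/-- The makespan of `σ` is exactly `C`. -/
def MakespanEq (I : SchedInstance ι) (σ : ι → ℝ) (C : ℝ) : Prop :=
  I.MakespanLE σ C ∧ ∃ t, I.endTime σ t = C

end SchedInstance

/-- A quasi-split stretched coupled-task instance: the compatibility graph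
splits into an undirected graph `GX` on the `X`-tasks, an independent set of
`Y`-tasks, and arcs `R` oriented from `X` to `Y`; every `X`-task has stretch
factor `1` and every `Y`-task `y` has stretch factor `α y ≥ 3`. -/
structure QuasiSplit (ιX ιY : Type*) where
  GX : SimpleGraph ιX
  R : ιX → ιY → Prop
  α : ιY → ℝ
  hα : ∀ y, 3 ≤ α y

namespace QuasiSplit

variable {ιX ιY : Type*}

/-- The scheduling instance determined by a quasi-split instance. -/
def inst (Q : QuasiSplit ιX ιY) : SchedInstance (ιX ⊕ ιY) where
  task := fun i => match i with
    | .inl _ => stretched 1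
    | .inr y => stretched (Q.α y)
  compat := fun i j => match i, j with
    | .inl x, .inl x' => Q.GX.Adj x x'
    | .inl x, .inr y => Q.R x y
    | _, _ => False

/-- A nesting assignment with domain `F`: every `x ∈ F` is assigned a `Y`-task
`g x` with `(x, g x)` an arc of the compatibility graph, and each `Y`-task `y`
receives at most `⌊α y / 3⌋` tasks. -/
def IsNesting [DecidableEq ιY] (Q : QuasiSplit ιX ιY) (F : Finset ιX)
    (g : ιX → ιY) : Prop :=
  (∀ x ∈ F, Q.R x (g x)) ∧
  ∀ y : ιY, (F.filter fun x => g x = y).card ≤ ⌊Q.α y / 3⌋₊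

/-- A matching of `GX` on the vertex set `X \ F`: a set of edges of `GX`
avoiding `F`, with pairwise distinct endpoints. -/
def IsMatchingOn (Q : QuasiSplit ιX ιY) (F : Finset ιX)
    (M : Finset (ιX × ιX)) : Prop :=
  (∀ p ∈ M, Q.GX.Adj p.1 p.2 ∧ p.1 ∉ F ∧ p.2 ∉ F) ∧
  ∀ p ∈ M, ∀ q ∈ M, p ≠ q →
    p.1 ≠ q.1 ∧ p.1 ≠ q.2 ∧ p.2 ≠ q.1 ∧ p.2 ≠ q.2

end QuasiSplit


open Finset in
lemma rk_lt_card {β : Type*} [DecidableEq β] {r : β → ℕ} {s : Finset β} {x : β}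
    (hx : x ∈ s) : (s.filter fun z => r z < r x).card < s.card := by
  apply Finset.card_lt_card
  refine ⟨Finset.filter_subset _ _, fun hsub => ?_⟩
  have := hsub hx
  simp at this

lemma rk_lt_rk {β : Type*} [DecidableEq β] {r : β → ℕ} {s : Finset β} {x x' : β}
    (hx : x ∈ s) (h : r x < r x') :
    (s.filter fun z => r z < r x).card < (s.filter fun z => r z < r x').card := by
  have hxn : x ∉ s.filter fun z => r z < r x := by simp
  have hsub : insert x (s.filter fun z => r z < r x) ⊆ s.filter fun z => r z < r x' := by
    intro z hz
    rcases Finset.mem_insert.1 hz with rfl | hz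
    · simp [hx, h]
    · simp only [Finset.mem_filter] at hz ⊢
      exact ⟨hz.1, hz.2.trans h⟩
  calc (s.filter fun z => r z < r x).card
      < (insert x (s.filter fun z => r z < r x)).card := by
        rw [Finset.card_insert_of_notMem hxn]; omega
    _ ≤ _ := Finset.card_le_card hsub

lemma rk_ne {β : Type*} [DecidableEq β] {r : β → ℕ} (hr : Function.Injective r)
    {s : Finset β} {x x' : β} (hx : x ∈ s) (hx' : x' ∈ s) (hne : x ≠ x') :
    (s.filter fun z => r z < r x).card ≠ (s.filter fun z => r z < r x').card := by
  rcases lt_trichotomy (r x) (r x') with h | h | h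
  · exact ne_of_lt (rk_lt_rk hx h)
  · exact absurd (hr h) hne
  · exact ne_of_gt (rk_lt_rk hx' h)

lemma rk_max {β : Type*} [DecidableEq β] {r : β → ℕ} (hr : Function.Injective r)
    {s : Finset β} {x : β} (hx : x ∈ s) (hmax : ∀ z ∈ s, r z ≤ r x) :
    (s.filter fun z => r z < r x).card = s.card - 1 := by
  have : s.filter (fun z => r z < r x) = s.erase x := by
    ext z
    simp only [Finset.mem_filter, Finset.mem_erase]
    constructor
    · rintro ⟨hz, hlt⟩; exact ⟨fun h => by subst h; omega, hz⟩
    · rintro ⟨hne, hz⟩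
      refine ⟨hz, lt_of_le_of_ne (hmax z hz) fun h => hne (hr h)⟩
  rw [this, Finset.card_erase_of_mem hx]

lemma spre_add_le {γ : Type*} [Fintype γ] [DecidableEq γ] {f : γ → ℝ}
    (hf : ∀ y, 0 ≤ f y) {r : γ → ℕ} {y y' : γ} (h : r y < r y') :
    (∑ z ∈ Finset.univ.filter fun z => r z < r y, f z) + f y ≤
      ∑ z ∈ Finset.univ.filter fun z => r z < r y', f z := by
  have hyn : y ∉ Finset.univ.filter fun z => r z < r y := by simp
  have hsub : insert y (Finset.univ.filter fun z => r z < r y) ⊆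
      Finset.univ.filter fun z => r z < r y' := by
    intro z hz
    rcases Finset.mem_insert.1 hz with rfl | hz
    · simp [h]
    · simp only [Finset.mem_filter] at hz ⊢
      exact ⟨hz.1, hz.2.trans h⟩
  calc (∑ z ∈ Finset.univ.filter fun z => r z < r y, f z) + f y
      = ∑ z ∈ insert y (Finset.univ.filter fun z => r z < r y), f z := by
        rw [Finset.sum_insert hyn]; ring
    _ ≤ _ := Finset.sum_le_sum_of_subset_of_nonneg hsub fun i _ _ => hf i

lemma spre_add_le_tot {γ : Type*} [Fintype γ] [DecidableEq γ] {f : γ → ℝ}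
    (hf : ∀ y, 0 ≤ f y) {r : γ → ℕ} (y : γ) :
    (∑ z ∈ Finset.univ.filter fun z => r z < r y, f z) + f y ≤ ∑ z, f z := by
  have hyn : y ∉ Finset.univ.filter fun z => r z < r y := by simp
  calc (∑ z ∈ Finset.univ.filter fun z => r z < r y, f z) + f y
      = ∑ z ∈ insert y (Finset.univ.filter fun z => r z < r y), f z := by
        rw [Finset.sum_insert hyn]; ring
    _ ≤ _ := Finset.sum_le_sum_of_subset_of_nonneg (Finset.subset_univ _)
        fun i _ _ => hf i

lemma spre_max {γ : Type*} [Fintype γ] [DecidableEq γ] {f : γ → ℝ}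
    {r : γ → ℕ} (hr : Function.Injective r) {y : γ} (hmax : ∀ z, r z ≤ r y) :
    (∑ z ∈ Finset.univ.filter fun z => r z < r y, f z) + f y = ∑ z, f z := by
  have : Finset.univ.filter (fun z => r z < r y) = Finset.univ.erase y := by
    ext z
    simp only [Finset.mem_filter, Finset.mem_erase, Finset.mem_univ, true_and, and_true]
    constructor
    · intro hlt h; subst h; omega
    · intro hne; exact lt_of_le_of_ne (hmax z) fun h => hne (hr h)
  rw [this, Finset.sum_erase_add _ _ (Finset.mem_univ y)]

lemma Ico_disj {a b c d : ℝ} (h : b ≤ c ∨ d ≤ a) :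
    Disjoint (Set.Ico a b) (Set.Ico c d) := by
  rw [Set.disjoint_left]
  rintro x ⟨h1, h2⟩ ⟨h3, h4⟩
  rcases h with h | h <;> linarith

lemma occ_subset (c s : ℝ) (hc : 0 ≤ c) :
    (stretched c).occupied s ⊆ Set.Ico s (s + 3 * c) := by
  simp only [CTask.occupied, stretched]
  apply Set.union_subset <;> apply Set.Ico_subset_Ico <;> linarith

lemma idle_subset (c s : ℝ) (hc : 0 ≤ c) :
    (stretched c).idleWindow s ⊆ Set.Ico s (s + 3 * c) := by
  simp only [CTask.idleWindow, stretched]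
  apply Set.Ico_subset_Ico <;> linarith

/-- given a nesting assignment `g` with domain `F ⊆ X` and a
matching `M` of `G_X` on `X \ F`, with `s = |X| − |F| − 2|M|` the number of
remaining tasks, there is a feasible schedule of makespan
`Σ_{y ∈ Y} 3·α(y) + 4|M| + 3s`. -/
theorem stmt13 {ιX ιY : Type*} [Fintype ιX] [Fintype ιY] [Nonempty ιY]
    [DecidableEq ιX] [DecidableEq ιY]
    (Q : QuasiSplit ιX ιY) (F : Finset ιX) (g : ιX → ιY)
    (M : Finset (ιX × ιX))
    (hg : Q.IsNesting F g) (hM : Q.IsMatchingOn F M) :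
    ∃ σ : ιX ⊕ ιY → ℝ, Q.inst.Feasible σ ∧
      Q.inst.MakespanEq σ ((∑ y : ιY, 3 * Q.α y) + 4 * (M.card : ℝ) +
        3 * ((Fintype.card ιX - F.card - 2 * M.card : ℕ) : ℝ)) := by

  classical
  obtain ⟨hgR, hgcard⟩ := hg
  obtain ⟨hMadj, hMdisj⟩ := hM
  -- ranks
  set rX : ιX → ℕ := fun x => (Fintype.equivFin ιX x : ℕ) with hrXdef
  have hrX : Function.Injective rX := fun a b h =>
    (Fintype.equivFin ιX).injective (Fin.val_injective h)
  set rP : ιX × ιX → ℕ := fun p => (Fintype.equivFin (ιX × ιX) p : ℕ) with hrPdef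
  have hrP : Function.Injective rP := fun a b h =>
    (Fintype.equivFin (ιX × ιX)).injective (Fin.val_injective h)
  set rY : ιY → ℕ := fun y => (Fintype.equivFin ιY y : ℕ) with hrYdef
  have hrY : Function.Injective rY := fun a b h =>
    (Fintype.equivFin ιY).injective (Fin.val_injective h)
  set m := M.card with hmdef
  set TY : ℝ := ∑ y, 3 * Q.α y with hTYdef
  set S : ιY → ℝ := fun y => ∑ z ∈ Finset.univ.filter (fun z => rY z < rY y), 3 * Q.α z
    with hSdef
  set kF : ιX → ℕ :=
    fun x => ((F.filter fun x' => g x' = g x).filter fun x' => rX x' < rX x).card with hkFdef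
  set jM : ιX × ιX → ℕ := fun p => (M.filter fun q => rP q < rP p).card with hjMdef
  set jM1 : ιX → ℕ := fun x => ∑ p ∈ M.filter (fun p => p.1 = x), jM p with hjM1def
  set jM2 : ιX → ℕ := fun x => ∑ p ∈ M.filter (fun p => p.2 = x), jM p with hjM2def
  set E1 : Finset ιX := M.image Prod.fst with hE1def
  set E2 : Finset ιX := M.image Prod.snd with hE2def
  set Rem : Finset ιX := Finset.univ \ (F ∪ (E1 ∪ E2)) with hRemdef
  set kR : ιX → ℕ := fun x => (Rem.filter fun x' => rX x' < rX x).card with hkRdef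
  set σ : ιX ⊕ ιY → ℝ := Sum.elim
    (fun x =>
      if x ∈ F then S (g x) + Q.α (g x) + 3 * (kF x : ℝ)
      else if x ∈ E1 then TY + 4 * (jM1 x : ℝ)
      else if x ∈ E2 then TY + 4 * (jM2 x : ℝ) + 1
      else TY + 4 * (m : ℝ) + 3 * (kR x : ℝ)) S with hσdef
  set D : ιX ⊕ ιY → ℝ := Sum.elim (fun _ => (3 : ℝ)) (fun y => 3 * Q.α y) with hDdef
  -- basic numeric facts
  have hα3 : ∀ y, (3 : ℝ) ≤ Q.α y := Q.hα
  have hα0 : ∀ y, (0 : ℝ) ≤ 3 * Q.α y := fun y => by linarith [hα3 y]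
  have hTY0 : 0 ≤ TY := Finset.sum_nonneg fun y _ => hα0 y
  have hS0 : ∀ y, 0 ≤ S y := fun y => Finset.sum_nonneg fun z _ => hα0 z
  have hSY : ∀ y, S y + 3 * Q.α y ≤ TY := fun y => spre_add_le_tot hα0 y
  have hSlt : ∀ y y', rY y < rY y' → S y + 3 * Q.α y ≤ S y' := fun y y' h =>
    spre_add_le hα0 h
  -- matching structure facts
  have hM12 : ∀ p ∈ M, p.1 ≠ p.2 := fun p hp => (hMadj p hp).1.ne
  have hfst : ∀ p ∈ M, ∀ q ∈ M, p.1 = q.1 → p = q := by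
    intro p hp q hq h
    by_contra hne
    exact (hMdisj p hp q hq hne).1 h
  have hsnd : ∀ p ∈ M, ∀ q ∈ M, p.2 = q.2 → p = q := by
    intro p hp q hq h
    by_contra hne
    exact (hMdisj p hp q hq hne).2.2.2 h
  have hfs : ∀ p ∈ M, ∀ q ∈ M, p.1 ≠ q.2 := by
    intro p hp q hq
    by_cases hpq : p = q
    · subst hpq; exact hM12 p hp
    · exact (hMdisj p hp q hq hpq).2.1
  -- σ value lemmas
  have vY : ∀ y, σ (Sum.inr y) = S y := fun y => rfl
  have vF : ∀ x ∈ F, σ (Sum.inl x) = S (g x) + Q.α (g x) + 3 * (kF x : ℝ) := by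
    intro x hx
    rw [hσdef]
    simp only [Sum.elim_inl]
    rw [if_pos hx]
  have vE1 : ∀ p ∈ M, σ (Sum.inl p.1) = TY + 4 * (jM p : ℝ) := by
    intro p hp
    have h1 : p.1 ∈ E1 := Finset.mem_image_of_mem _ hp
    have hj : jM1 p.1 = jM p := by
      have hfil : M.filter (fun q => q.1 = p.1) = {p} := by
        ext q
        simp only [Finset.mem_filter, Finset.mem_singleton]
        constructor
        · rintro ⟨hq, h⟩; exact hfst q hq p hp h
        · rintro rfl; exact ⟨hp, rfl⟩
      rw [hjM1def]
      simp only [hfil, Finset.sum_singleton]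
    rw [hσdef]
    simp only [Sum.elim_inl]
    rw [if_neg (hMadj p hp).2.1, if_pos h1, hj]
  have vE2 : ∀ p ∈ M, σ (Sum.inl p.2) = TY + 4 * (jM p : ℝ) + 1 := by
    intro p hp
    have h2 : p.2 ∈ E2 := Finset.mem_image_of_mem _ hp
    have hn1 : p.2 ∉ E1 := by
      rw [hE1def]
      simp only [Finset.mem_image]
      push_neg
      intro q hq
      exact hfs q hq p hp
    have hj : jM2 p.2 = jM p := by
      have hfil : M.filter (fun q => q.2 = p.2) = {p} := by
        ext q
        simp only [Finset.mem_filter, Finset.mem_singleton]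
        constructor
        · rintro ⟨hq, h⟩; exact hsnd q hq p hp h
        · rintro rfl; exact ⟨hp, rfl⟩
      rw [hjM2def]
      simp only [hfil, Finset.sum_singleton]
    rw [hσdef]
    simp only [Sum.elim_inl]
    rw [if_neg (hMadj p hp).2.2, if_neg hn1, if_pos h2, hj]
  have vRmem : ∀ x ∈ Rem, x ∉ F ∧ x ∉ E1 ∧ x ∉ E2 := by
    intro x hx
    rw [hRemdef] at hx
    simp only [Finset.mem_sdiff, Finset.mem_union, Finset.mem_univ, true_and, not_or] at hx
    exact ⟨hx.1, hx.2.1, hx.2.2⟩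
  have vR : ∀ x ∈ Rem, σ (Sum.inl x) = TY + 4 * (m : ℝ) + 3 * (kR x : ℝ) := by
    intro x hx
    obtain ⟨h1, h2, h3⟩ := vRmem x hx
    rw [hσdef]
    simp only [Sum.elim_inl]
    rw [if_neg h1, if_neg h2, if_neg h3]
  have hcases : ∀ x : ιX, x ∈ F ∨ x ∈ E1 ∨ x ∈ E2 ∨ x ∈ Rem := by
    intro x
    by_cases h1 : x ∈ F
    · exact Or.inl h1
    by_cases h2 : x ∈ E1
    · exact Or.inr (Or.inl h2)
    by_cases h3 : x ∈ E2
    · exact Or.inr (Or.inr (Or.inl h3))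
    refine Or.inr (Or.inr (Or.inr ?_))
    rw [hRemdef]
    simp only [Finset.mem_sdiff, Finset.mem_union, Finset.mem_univ, true_and, not_or]
    exact ⟨h1, h2, h3⟩
  have getM : ∀ x : ιX, x ∈ E1 ∨ x ∈ E2 → ∃ p ∈ M, x = p.1 ∨ x = p.2 := by
    rintro x (hx | hx)
    · obtain ⟨p, hp, h⟩ := Finset.mem_image.1 hx
      exact ⟨p, hp, Or.inl h.symm⟩
    · obtain ⟨p, hp, h⟩ := Finset.mem_image.1 hx
      exact ⟨p, hp, Or.inr h.symm⟩
  -- index bound facts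
  have hkFb : ∀ x ∈ F, 3 * (kF x : ℝ) + 3 ≤ Q.α (g x) := by
    intro x hx
    have h1 : kF x < (F.filter fun x' => g x' = g x).card :=
      rk_lt_card (Finset.mem_filter.2 ⟨hx, rfl⟩)
    have h2 : (F.filter fun x' => g x' = g x).card ≤ ⌊Q.α (g x) / 3⌋₊ := hgcard (g x)
    have h3 : (⌊Q.α (g x) / 3⌋₊ : ℝ) ≤ Q.α (g x) / 3 :=
      Nat.floor_le (by linarith [hα3 (g x)])
    have h4 : (kF x : ℝ) + 1 ≤ (⌊Q.α (g x) / 3⌋₊ : ℝ) := by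
      exact_mod_cast Nat.succ_le_of_lt (lt_of_lt_of_le h1 h2)
    linarith
  have hkFne : ∀ x ∈ F, ∀ x' ∈ F, x ≠ x' → g x = g x' → kF x ≠ kF x' := by
    intro x hx x' hx' hne hgg
    have hset : (F.filter fun z => g z = g x') = (F.filter fun z => g z = g x) := by
      rw [hgg]
    rw [hkFdef]
    simp only [hset]
    exact rk_ne hrX (Finset.mem_filter.2 ⟨hx, rfl⟩)
      (Finset.mem_filter.2 ⟨hx', hgg.symm⟩) hne
  have hjlt : ∀ p ∈ M, jM p < m := fun p hp => rk_lt_card hp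
  have hjne : ∀ p ∈ M, ∀ q ∈ M, p ≠ q → jM p ≠ jM q := fun p hp q hq h =>
    rk_ne hrP hp hq h
  have hkRlt : ∀ x ∈ Rem, kR x < Rem.card := fun x hx => rk_lt_card hx
  have hkRne : ∀ x ∈ Rem, ∀ x' ∈ Rem, x ≠ x' → kR x ≠ kR x' := fun x hx x' hx' h =>
    rk_ne hrX hx hx' h
  -- interval bounds per category
  have bF : ∀ x ∈ F, S (g x) + Q.α (g x) ≤ σ (Sum.inl x) ∧
      σ (Sum.inl x) + 3 ≤ S (g x) + 2 * Q.α (g x) := by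
    intro x hx
    rw [vF x hx]
    have := hkFb x hx
    have h0 : (0 : ℝ) ≤ (kF x : ℝ) := Nat.cast_nonneg _
    constructor <;> linarith
  have bM : ∀ p ∈ M, ∀ x : ιX, x = p.1 ∨ x = p.2 →
      TY + 4 * (jM p : ℝ) ≤ σ (Sum.inl x) ∧
      σ (Sum.inl x) + 3 ≤ TY + 4 * (jM p : ℝ) + 4 := by
    rintro p hp x (rfl | rfl)
    · rw [vE1 p hp]; constructor <;> linarith
    · rw [vE2 p hp]; constructor <;> linarith
  have bR : ∀ x ∈ Rem, TY + 4 * (m : ℝ) ≤ σ (Sum.inl x) ∧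
      σ (Sum.inl x) + 3 ≤ TY + 4 * (m : ℝ) + 3 * (Rem.card : ℝ) := by
    intro x hx
    rw [vR x hx]
    have h1 : (kR x : ℝ) + 1 ≤ (Rem.card : ℝ) := by exact_mod_cast hkRlt x hx
    have h0 : (0 : ℝ) ≤ (kR x : ℝ) := Nat.cast_nonneg _
    constructor <;> linarith
  have hFub : ∀ x ∈ F, σ (Sum.inl x) + 3 ≤ TY := by
    intro x hx
    obtain ⟨_, h2⟩ := bF x hx
    have := hSY (g x)
    have := hα3 (g x)
    linarith
  have hMlb : ∀ x : ιX, x ∈ E1 ∨ x ∈ E2 → TY ≤ σ (Sum.inl x) := by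
    intro x hx
    obtain ⟨p, hp, hxp⟩ := getM x hx
    obtain ⟨h1, _⟩ := bM p hp x hxp
    have h0 : (0 : ℝ) ≤ (jM p : ℝ) := Nat.cast_nonneg _
    linarith
  have hMub : ∀ x : ιX, x ∈ E1 ∨ x ∈ E2 → σ (Sum.inl x) + 3 ≤ TY + 4 * (m : ℝ) := by
    intro x hx
    obtain ⟨p, hp, hxp⟩ := getM x hx
    obtain ⟨_, h2⟩ := bM p hp x hxp
    have h1 : (jM p : ℝ) + 1 ≤ (m : ℝ) := by exact_mod_cast hjlt p hp
    linarith
  have hm0 : (0 : ℝ) ≤ (m : ℝ) := Nat.cast_nonneg _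
  have hRc0 : (0 : ℝ) ≤ (Rem.card : ℝ) := Nat.cast_nonneg _
  -- the separation lemma
  have hSne : ∀ y y', y ≠ y' → S y + 3 * Q.α y ≤ S y' ∨ S y' + 3 * Q.α y' ≤ S y := by
    intro y y' h
    have : rY y ≠ rY y' := fun hr => h (hrY hr)
    rcases this.lt_or_gt with hr | hr
    · exact Or.inl (hSlt _ _ hr)
    · exact Or.inr (hSlt _ _ hr)
  have KYX : ∀ (y : ιY) (x : ιX),
      (S y + 3 * Q.α y ≤ σ (Sum.inl x) ∨ σ (Sum.inl x) + 3 ≤ S y) ∨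
      (x ∈ F ∧ g x = y) := by
    intro y x
    rcases hcases x with hx | hx | hx | hx
    · by_cases hgy : g x = y
      · exact Or.inr ⟨hx, hgy⟩
      · left
        obtain ⟨h1, h2⟩ := bF x hx
        have hne : g x ≠ y := hgy
        rcases hSne (g x) y hne with h | h
        · right; have := hα3 (g x); linarith
        · left; have := hα3 (g x); linarith
    · left; left; have := hMlb x (Or.inl hx); have := hSY y; linarith
    · left; left; have := hMlb x (Or.inr hx); have := hSY y; linarith
    · left; left; obtain ⟨h1, _⟩ := bR x hx; have := hSY y; linarith
  have KXX : ∀ x x' : ιX, x ≠ x' →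
      (σ (Sum.inl x) + 3 ≤ σ (Sum.inl x') ∨ σ (Sum.inl x') + 3 ≤ σ (Sum.inl x)) ∨
      (∃ p ∈ M, (x = p.1 ∧ x' = p.2) ∨ (x = p.2 ∧ x' = p.1)) := by
    intro x x' hxx
    have MM : (x ∈ E1 ∨ x ∈ E2) → (x' ∈ E1 ∨ x' ∈ E2) →
        ((σ (Sum.inl x) + 3 ≤ σ (Sum.inl x') ∨ σ (Sum.inl x') + 3 ≤ σ (Sum.inl x)) ∨
          (∃ p ∈ M, (x = p.1 ∧ x' = p.2) ∨ (x = p.2 ∧ x' = p.1))) := by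
      intro hx hx'
      obtain ⟨p, hp, hxp⟩ := getM x hx
      obtain ⟨q, hq, hxq⟩ := getM x' hx'
      by_cases hpq : p = q
      · subst hpq
        right
        refine ⟨p, hp, ?_⟩
        rcases hxp with rfl | rfl <;> rcases hxq with h | h
        · exact absurd h.symm hxx
        · exact Or.inl ⟨rfl, h⟩
        · exact Or.inr ⟨rfl, h⟩
        · exact absurd h.symm hxx
      · left
        have hne := hjne p hp q hq hpq
        obtain ⟨l1, u1⟩ := bM p hp x hxp
        obtain ⟨l2, u2⟩ := bM q hq x' hxq
        rcases hne.lt_or_gt with h | h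
        · left
          have : (jM p : ℝ) + 1 ≤ (jM q : ℝ) := by exact_mod_cast h
          linarith
        · right
          have : (jM q : ℝ) + 1 ≤ (jM p : ℝ) := by exact_mod_cast h
          linarith
    rcases hcases x with hx | hx | hx | hx <;> rcases hcases x' with hx' | hx' | hx' | hx'
    · -- F F
      left
      by_cases hgg : g x = g x'
      · have hk := hkFne x hx x' hx' hxx hgg
        rw [vF x hx, vF x' hx', hgg]
        rcases hk.lt_or_gt with h | h
        · left
          have : (kF x : ℝ) + 1 ≤ (kF x' : ℝ) := by exact_mod_cast h
          linarith
        · right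
          have : (kF x' : ℝ) + 1 ≤ (kF x : ℝ) := by exact_mod_cast h
          linarith
      · obtain ⟨l1, u1⟩ := bF x hx
        obtain ⟨l2, u2⟩ := bF x' hx'
        have a1 := hα3 (g x); have a2 := hα3 (g x')
        rcases hSne (g x) (g x') hgg with h | h
        · left; linarith
        · right; linarith
    · left; left; have := hFub x hx; have := hMlb x' (Or.inl hx'); linarith
    · left; left; have := hFub x hx; have := hMlb x' (Or.inr hx'); linarith
    · left; left
      have := hFub x hx; obtain ⟨l, _⟩ := bR x' hx'; linarith
    · left; right; have := hFub x' hx'; have := hMlb x (Or.inl hx); linarith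
    · exact MM (Or.inl hx) (Or.inl hx')
    · exact MM (Or.inl hx) (Or.inr hx')
    · left; left; have := hMub x (Or.inl hx); obtain ⟨l, _⟩ := bR x' hx'; linarith
    · left; right; have := hFub x' hx'; have := hMlb x (Or.inr hx); linarith
    · exact MM (Or.inr hx) (Or.inl hx')
    · exact MM (Or.inr hx) (Or.inr hx')
    · left; left; have := hMub x (Or.inr hx); obtain ⟨l, _⟩ := bR x' hx'; linarith
    · left; right; have := hFub x' hx'; obtain ⟨l, _⟩ := bR x hx; linarith
    · left; right; have := hMub x' (Or.inl hx'); obtain ⟨l, _⟩ := bR x hx; linarith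
    · left; right; have := hMub x' (Or.inr hx'); obtain ⟨l, _⟩ := bR x hx; linarith
    · -- R R
      left
      have hk := hkRne x hx x' hx' hxx
      rw [vR x hx, vR x' hx']
      rcases hk.lt_or_gt with h | h
      · left
        have : (kR x : ℝ) + 1 ≤ (kR x' : ℝ) := by exact_mod_cast h
        linarith
      · right
        have : (kR x' : ℝ) + 1 ≤ (kR x : ℝ) := by exact_mod_cast h
        linarith
  have KEY : ∀ i j : ιX ⊕ ιY, i ≠ j →
      (σ i + D i ≤ σ j ∨ σ j + D j ≤ σ i) ∨
      (∃ p ∈ M, (i = Sum.inl p.1 ∧ j = Sum.inl p.2) ∨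
        (i = Sum.inl p.2 ∧ j = Sum.inl p.1)) ∨
      (∃ x ∈ F, (i = Sum.inl x ∧ j = Sum.inr (g x)) ∨
        (i = Sum.inr (g x) ∧ j = Sum.inl x)) := by
    intro i j hne
    have hD1 : ∀ x : ιX, D (Sum.inl x) = 3 := fun _ => rfl
    have hD2 : ∀ y : ιY, D (Sum.inr y) = 3 * Q.α y := fun _ => rfl
    cases i with
    | inl x =>
      cases j with
      | inl x' =>
        have hxx : x ≠ x' := fun h => hne (by rw [h])
        rcases KXX x x' hxx with h | ⟨p, hp, h⟩
        · left
          rw [hD1, hD1]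
          exact h
        · right; left
          refine ⟨p, hp, ?_⟩
          rcases h with ⟨rfl, rfl⟩ | ⟨rfl, rfl⟩
          · exact Or.inl ⟨rfl, rfl⟩
          · exact Or.inr ⟨rfl, rfl⟩
      | inr y =>
        rcases KYX y x with (h | h) | ⟨hxF, hgy⟩
        · left; right; rw [hD2, vY]; exact h
        · left; left; rw [hD1, vY]; exact h
        · right; right
          exact ⟨x, hxF, Or.inl ⟨rfl, by rw [hgy]⟩⟩
    | inr y =>
      cases j with
      | inl x =>
        rcases KYX y x with (h | h) | ⟨hxF, hgy⟩
        · left; left; rw [hD2, vY]; exact h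
        · left; right; rw [hD1, vY]; exact h
        · right; right
          exact ⟨x, hxF, Or.inr ⟨by rw [hgy], rfl⟩⟩
      | inr y' =>
        have hyy : y ≠ y' := fun h => hne (by rw [h])
        left
        rw [hD2, hD2, vY, vY]
        exact hSne y y' hyy
  -- occupied / idle window containment in spans
  have occ1 : ∀ s : ℝ, (stretched 1).occupied s ⊆ Set.Ico s (s + 3) := by
    intro s
    have h := occ_subset 1 s (by norm_num)
    norm_num at h
    exact h
  have idl1 : ∀ s : ℝ, (stretched 1).idleWindow s ⊆ Set.Ico s (s + 3) := by
    intro s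
    have h := idle_subset 1 s (by norm_num)
    norm_num at h
    exact h
  have spanOcc : ∀ i, (Q.inst.task i).occupied (σ i) ⊆ Set.Ico (σ i) (σ i + D i) := by
    intro i
    cases i with
    | inl x => exact occ1 _
    | inr y => exact occ_subset (Q.α y) _ (by linarith [hα3 y])
  have spanIdl : ∀ i, (Q.inst.task i).idleWindow (σ i) ⊆ Set.Ico (σ i) (σ i + D i) := by
    intro i
    cases i with
    | inl x => exact idl1 _
    | inr y => exact idle_subset (Q.α y) _ (by linarith [hα3 y])
  -- nesting geometry
  have nestB : ∀ x ∈ F, Disjoint ((stretched (Q.α (g x))).occupied (S (g x)))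
      (Set.Ico (S (g x) + Q.α (g x)) (S (g x) + 2 * Q.α (g x))) := by
    intro x hx
    have a1 := hα3 (g x)
    simp only [CTask.occupied, stretched]
    rw [Set.disjoint_union_left]
    constructor <;> apply Ico_disj
    · left; linarith
    · right; linarith
  have nestIn : ∀ x ∈ F, Set.Ico (σ (Sum.inl x)) (σ (Sum.inl x) + 3) ⊆
      Set.Ico (S (g x) + Q.α (g x)) (S (g x) + 2 * Q.α (g x)) := by
    intro x hx
    obtain ⟨h1, h2⟩ := bF x hx
    apply Set.Ico_subset_Ico <;> linarith
  -- matched partners geometry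
  have pairD : ∀ p ∈ M, Disjoint ((Q.inst.task (Sum.inl p.1)).occupied (σ (Sum.inl p.1)))
      ((Q.inst.task (Sum.inl p.2)).occupied (σ (Sum.inl p.2))) := by
    intro p hp
    show Disjoint ((stretched 1).occupied (σ (Sum.inl p.1)))
      ((stretched 1).occupied (σ (Sum.inl p.2)))
    rw [vE1 p hp, vE2 p hp]
    simp only [CTask.occupied, stretched]
    rw [Set.disjoint_union_left]
    constructor <;> rw [Set.disjoint_union_right] <;> constructor <;> apply Ico_disj
    · left; linarith
    · left; linarith
    · right; linarith
    · left; linarith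
  -- feasibility: start times nonnegative
  have hσ0 : ∀ i, 0 ≤ σ i := by
    intro i
    cases i with
    | inr y => exact hS0 y
    | inl x =>
      rcases hcases x with hx | hx | hx | hx
      · obtain ⟨h1, _⟩ := bF x hx
        have := hS0 (g x); have := hα3 (g x); linarith
      · have := hMlb x (Or.inl hx); linarith
      · have := hMlb x (Or.inr hx); linarith
      · obtain ⟨h1, _⟩ := bR x hx; linarith
  -- feasibility: pairwise disjoint occupied sets
  have hdisj : ∀ t t' : ιX ⊕ ιY, t ≠ t' →
      Disjoint ((Q.inst.task t).occupied (σ t)) ((Q.inst.task t').occupied (σ t')) := by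
    intro t t' hne
    rcases KEY t t' hne with h | ⟨p, hp, h⟩ | ⟨x, hxF, h⟩
    · exact Set.disjoint_of_subset (spanOcc t) (spanOcc t') (Ico_disj h)
    · rcases h with ⟨rfl, rfl⟩ | ⟨rfl, rfl⟩
      · exact pairD p hp
      · exact (pairD p hp).symm
    · have hcore : Disjoint ((Q.inst.task (Sum.inr (g x))).occupied (σ (Sum.inr (g x))))
          ((Q.inst.task (Sum.inl x)).occupied (σ (Sum.inl x))) := by
        have h1 : (Q.inst.task (Sum.inl x)).occupied (σ (Sum.inl x)) ⊆
            Set.Ico (S (g x) + Q.α (g x)) (S (g x) + 2 * Q.α (g x)) :=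
          (occ1 _).trans (nestIn x hxF)
        exact Set.disjoint_of_subset_right h1 (nestB x hxF)
      rcases h with ⟨rfl, rfl⟩ | ⟨rfl, rfl⟩
      · exact hcore.symm
      · exact hcore
  -- feasibility: compatibility
  have hcompat : ∀ t t' : ιX ⊕ ιY, t ≠ t' →
      (((Q.inst.task t').occupied (σ t')) ∩ ((Q.inst.task t).idleWindow (σ t))).Nonempty →
      Q.inst.compat t' t := by
    intro t t' hne hint
    rcases KEY t t' hne with h | ⟨p, hp, h⟩ | ⟨x, hxF, h⟩
    · exfalso
      obtain ⟨z, hz1, hz2⟩ := hint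
      have h1 := spanOcc t' hz1
      have h2 := spanIdl t hz2
      simp only [Set.mem_Ico] at h1 h2
      rcases h with h | h <;> linarith [h1.1, h1.2, h2.1, h2.2]
    · rcases h with ⟨rfl, rfl⟩ | ⟨rfl, rfl⟩
      · exact ((hMadj p hp).1.symm : Q.GX.Adj p.2 p.1)
      · exact (hMadj p hp).1
    · rcases h with ⟨rfl, rfl⟩ | ⟨rfl, rfl⟩
      · exfalso
        obtain ⟨z, hz1, hz2⟩ := hint
        have h1 : z ∈ Set.Ico (S (g x) + Q.α (g x)) (S (g x) + 2 * Q.α (g x)) :=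
          nestIn x hxF ((idl1 _) hz2)
        exact Set.disjoint_left.1 (nestB x hxF) hz1 h1
      · exact (hgR x hxF : Q.R x (g x))
  -- cardinalities
  have hE1card : E1.card = m := by
    rw [hE1def, hmdef]
    exact Finset.card_image_of_injOn fun p hp q hq h =>
      hfst p (Finset.mem_coe.1 hp) q (Finset.mem_coe.1 hq) h
  have hE2card : E2.card = m := by
    rw [hE2def, hmdef]
    exact Finset.card_image_of_injOn fun p hp q hq h =>
      hsnd p (Finset.mem_coe.1 hp) q (Finset.mem_coe.1 hq) h
  have hE12 : Disjoint E1 E2 := by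
    rw [Finset.disjoint_left]
    intro a h1 h2
    obtain ⟨p, hp, hpa⟩ := Finset.mem_image.1 h1
    obtain ⟨q, hq, hqa⟩ := Finset.mem_image.1 h2
    exact hfs p hp q hq (hpa.trans hqa.symm)
  have hFE : Disjoint F (E1 ∪ E2) := by
    rw [Finset.disjoint_left]
    intro a h1 h2
    rcases Finset.mem_union.1 h2 with h | h
    · obtain ⟨p, hp, hpa⟩ := Finset.mem_image.1 h
      exact (hMadj p hp).2.1 (hpa ▸ h1)
    · obtain ⟨p, hp, hpa⟩ := Finset.mem_image.1 h
      exact (hMadj p hp).2.2 (hpa ▸ h1)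
  have hUcard : (F ∪ (E1 ∪ E2)).card = F.card + 2 * m := by
    rw [Finset.card_union_of_disjoint hFE, Finset.card_union_of_disjoint hE12,
      hE1card, hE2card]
    ring
  have hRemcard : Rem.card = Fintype.card ιX - (F.card + 2 * m) := by
    rw [hRemdef, Finset.card_sdiff_of_subset (Finset.subset_univ _), hUcard, Finset.card_univ]
  have hCcast : ((Fintype.card ιX - F.card - 2 * m : ℕ) : ℝ) = (Rem.card : ℝ) := by
    rw [hRemcard]
    congr 1
    omega
  -- durations
  have hdur : ∀ i, (Q.inst.task i).dur = D i := by
    intro i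
    cases i with
    | inl x =>
      show (stretched 1).dur = 3
      norm_num [CTask.dur, stretched]
    | inr y =>
      show (stretched (Q.α y)).dur = 3 * Q.α y
      simp only [CTask.dur, stretched]
      ring
  -- makespan bound
  have hML : Q.inst.MakespanLE σ (TY + 4 * (m : ℝ) + 3 * (Rem.card : ℝ)) := by
    intro t
    show σ t + (Q.inst.task t).dur ≤ _
    rw [hdur t]
    cases t with
    | inr y =>
      have hD : D (Sum.inr y) = 3 * Q.α y := rfl
      rw [hD, vY]
      have := hSY y
      linarith
    | inl x =>
      have hD : D (Sum.inl x) = 3 := rfl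
      rw [hD]
      rcases hcases x with hx | hx | hx | hx
      · have := hFub x hx; linarith
      · have := hMub x (Or.inl hx); linarith
      · have := hMub x (Or.inr hx); linarith
      · obtain ⟨_, h2⟩ := bR x hx; linarith
  -- conclusion
  refine ⟨σ, ⟨hσ0, hdisj, hcompat⟩, ?_⟩
  rw [show ((Fintype.card ιX - F.card - 2 * m : ℕ) : ℝ) = (Rem.card : ℝ) from hCcast]
  refine ⟨hML, ?_⟩
  by_cases hR : Rem.Nonempty
  · obtain ⟨x, hx, hmax⟩ := Finset.exists_max_image Rem rX hR
    refine ⟨Sum.inl x, ?_⟩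
    have hkRx : kR x = Rem.card - 1 := by
      simp only [hkRdef]
      exact rk_max hrX hx hmax
    have h1 : 1 ≤ Rem.card := Finset.card_pos.2 hR
    show σ (Sum.inl x) + (Q.inst.task (Sum.inl x)).dur = _
    have hD3 : D (Sum.inl x) = 3 := rfl
    rw [hdur, hD3, vR x hx, hkRx]
    have hc : ((Rem.card - 1 : ℕ) : ℝ) = (Rem.card : ℝ) - 1 := by
      push_cast [h1]
      ring
    rw [hc]
    ring
  · have hR0 : Rem.card = 0 := by
      rw [Finset.card_eq_zero]
      exact Finset.not_nonempty_iff_eq_empty.1 hR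
    by_cases hM0 : M.Nonempty
    · obtain ⟨p, hp, hmax⟩ := Finset.exists_max_image M rP hM0
      refine ⟨Sum.inl p.2, ?_⟩
      have hjp : jM p = m - 1 := by
        simp only [hjMdef, hmdef]
        exact rk_max hrP hp hmax
      have h1 : 1 ≤ m := by
        rw [hmdef]
        exact Finset.card_pos.2 hM0
      show σ (Sum.inl p.2) + (Q.inst.task (Sum.inl p.2)).dur = _
      have hD3 : D (Sum.inl p.2) = 3 := rfl
      rw [hdur, hD3, vE2 p hp, hjp, hR0]
      have hc : ((m - 1 : ℕ) : ℝ) = (m : ℝ) - 1 := by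
        push_cast [h1]
        ring
      rw [hc]
      push_cast
      ring
    · have hm0' : m = 0 := by
        rw [hmdef, Finset.card_eq_zero]
        exact Finset.not_nonempty_iff_eq_empty.1 hM0
      obtain ⟨ymax, -, hmax⟩ :=
        Finset.exists_max_image (Finset.univ : Finset ιY) rY Finset.univ_nonempty
      refine ⟨Sum.inr ymax, ?_⟩
      show σ (Sum.inr ymax) + (Q.inst.task (Sum.inr ymax)).dur = _
      have hD3 : D (Sum.inr ymax) = 3 * Q.α ymax := rfl
      rw [hdur, hD3, vY]
      have hmax' : ∀ z, rY z ≤ rY ymax := fun z => hmax z (Finset.mem_univ z)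
      have hT := spre_max (f := fun z => 3 * Q.α z) hrY hmax'
      rw [hR0, hm0', hTYdef]
      simp only [hSdef]
      push_cast
      linarith [hT]
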